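/- Singular value interpolation of the subspace framework: let P(λ; ν) be a quadratic matrix polynomial, z a complex number, and suppose the subspace V contains a right singular vector v corresponding to σ = σ_min(P(z; ν)). If u is the corresponding consistent unit left singular vector (P(z;ν)v = σu and u*P(z;ν) = σv*), and v = V_mat a for a unit vector a, then u and a are consistent unit left and right singular vectors of P(z;ν)V_mat corresponding to its smallest singular value, which equals σ. -/

import Mathlib

open Matrix Complex

/-- Euclidean norm of a complex vector. -/
noncomputable def vnorm {ι : Type*} [Fintype ι] (v : ι → ℂ) : ℝ :=
  Real.sqrt (∑ i, ‖v i‖ ^ 2)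

/-- Smallest singular value of a (possibly rectangular) complex matrix:
the infimum of `‖A v‖` over unit vectors `v`. -/
noncomputable def sigmaMin {ι κ : Type*} [Fintype ι] [Fintype κ]
    (A : Matrix ι κ ℂ) : ℝ :=
  sInf {t : ℝ | ∃ v : κ → ℂ, vnorm v = 1 ∧ t = vnorm (A.mulVec v)}

/-- Spectral (operator 2-) norm of a complex matrix. -/
noncomputable def specNorm {ι κ : Type*} [Fintype ι] [Fintype κ]
    (A : Matrix ι κ ℂ) : ℝ :=
  sSup {t : ℝ | ∃ v : κ → ℂ, vnorm v = 1 ∧ t = vnorm (A.mulVec v)}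

/-- The weight/scaling function `p_w(z) = √(w_m² z⁴ + w_c² z² + w_k²)`. -/
noncomputable def pw (wm wc wk z : ℝ) : ℝ :=
  Real.sqrt (wm ^ 2 * z ^ 4 + wc ^ 2 * z ^ 2 + wk ^ 2)

/-- The quadratic matrix polynomial `P(z) = z² M + z C + K`. -/
noncomputable def Ppoly {n : ℕ} (M C K : Matrix (Fin n) (Fin n) ℂ) (z : ℂ) :
    Matrix (Fin n) (Fin n) ℂ :=
  z ^ 2 • M + z • C + K

/-- The column span (range) of a matrix, viewed as a subspace of `ℂⁿ`. -/
noncomputable def colSpan {n r : ℕ} (A : Matrix (Fin n) (Fin r) ℂ) : Submodule ℂ (Fin n → ℂ) :=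
  Submodule.span ℂ (Set.range fun j => fun i => A i j)

/-- The ε-pseudospectrum of the quadratic matrix polynomial `P(λ)=λ²M+λC+K`
(singular value characterization). -/
noncomputable def Lam {n : ℕ} (M C K : Matrix (Fin n) (Fin n) ℂ)
    (ε wm wc wk : ℝ) : Set ℂ :=
  {z : ℂ | sigmaMin (Ppoly M C K z) ≤ ε * pw wm wc wk ‖z‖}

/-- The restricted ε-pseudospectrum determined by the basis matrix `Vm`. -/
noncomputable def LamRes {n r : ℕ} (M C K : Matrix (Fin n) (Fin n) ℂ)
    (Vm : Matrix (Fin n) (Fin r) ℂ) (ε wm wc wk : ℝ) : Set ℂ :=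
  {z : ℂ | sigmaMin (Ppoly M C K z * Vm) ≤ ε * pw wm wc wk ‖z‖}

/-!
The pair transfers by `A Vm a = A v` and `Vmᴴ v = Vmᴴ Vm a = a`. For the value: `Vm` is an
isometry, so each unit `w` gives a unit `Vm w`, whence `σ_min(A) ≤ ‖A Vm w‖`; and `a` attains
`‖A Vm a‖ = ‖σ u‖ = σ`.
-/

section VNorm

variable {ι κ : Type*} [Fintype ι] [Fintype κ]

lemma vnorm_nonneg (x : ι → ℂ) : 0 ≤ vnorm x :=
  Real.sqrt_nonneg _

lemma vnorm_smul (c : ℂ) (x : ι → ℂ) : vnorm (c • x) = ‖c‖ * vnorm x := by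
  unfold vnorm
  simp only [Pi.smul_apply, smul_eq_mul, norm_mul, mul_pow]
  rw [← Finset.mul_sum, Real.sqrt_mul (sq_nonneg _), Real.sqrt_sq (norm_nonneg c)]

lemma vnorm_eq_sqrt_re_star_dotProduct_self (x : ι → ℂ) :
    vnorm x = Real.sqrt (star x ⬝ᵥ x).re := by
  unfold vnorm
  congr 1
  simp only [dotProduct, Complex.re_sum, Pi.star_apply]
  congr 1 with i
  simp [Complex.sq_norm, Complex.normSq_apply, Complex.mul_re]

lemma vnorm_mulVec_of_conjTranspose_mul_self_eq_one [DecidableEq κ] {V : Matrix ι κ ℂ}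
    (hV : Vᴴ * V = 1) (w : κ → ℂ) : vnorm (V *ᵥ w) = vnorm w := by
  rw [vnorm_eq_sqrt_re_star_dotProduct_self, vnorm_eq_sqrt_re_star_dotProduct_self,
    star_mulVec, dotProduct_mulVec, vecMul_vecMul, hV, vecMul_one]

end VNorm

section SigmaMin

variable {ι κ μ : Type*} [Fintype ι] [Fintype κ] [Fintype μ]

lemma sigmaMin_nonneg (A : Matrix ι κ ℂ) : 0 ≤ sigmaMin A :=
  Real.sInf_nonneg fun _ ⟨_, _, ht⟩ => ht ▸ vnorm_nonneg _

lemma sigmaMin_le_vnorm_mulVec (A : Matrix ι κ ℂ) {v : κ → ℂ} (hv : vnorm v = 1) :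
    sigmaMin A ≤ vnorm (A *ᵥ v) :=
  csInf_le ⟨0, fun _ ⟨_, _, ht⟩ => ht ▸ vnorm_nonneg _⟩ ⟨v, hv, rfl⟩

lemma sigmaMin_eq_vnorm_mulVec_of_forall_le {A : Matrix ι κ ℂ} {v : κ → ℂ}
    (hv : vnorm v = 1)
    (hmin : ∀ w, vnorm w = 1 → vnorm (A *ᵥ v) ≤ vnorm (A *ᵥ w)) :
    sigmaMin A = vnorm (A *ᵥ v) :=
  le_antisymm (sigmaMin_le_vnorm_mulVec A hv) <|
    le_csInf ⟨_, v, hv, rfl⟩ fun _ ⟨w, hw, ht⟩ => ht ▸ hmin w hw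

lemma sigmaMin_le_vnorm_mul_mulVec [DecidableEq μ] {A : Matrix ι κ ℂ} {V : Matrix κ μ ℂ}
    (hV : Vᴴ * V = 1) {w : μ → ℂ} (hw : vnorm w = 1) :
    sigmaMin A ≤ vnorm ((A * V) *ᵥ w) := by
  rw [← mulVec_mulVec]
  exact sigmaMin_le_vnorm_mulVec A
    (by rw [vnorm_mulVec_of_conjTranspose_mul_self_eq_one hV, hw])

end SigmaMin

theorem consistent_pair_restriction_general
    {n r : ℕ}
    (A : Matrix (Fin n) (Fin n) ℂ)
    (Vm : Matrix (Fin n) (Fin r) ℂ) (hVm : Vmᴴ * Vm = 1)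
    (σ : ℝ) (u v : Fin n → ℂ) (a : Fin r → ℂ)
    (hu : vnorm u = 1) (ha : vnorm a = 1)
    (hva : v = Vm.mulVec a)
    (hright : A.mulVec v = (σ : ℂ) • u)
    (hleft : Aᴴ.mulVec u = (σ : ℂ) • v)
    (hσ : σ = sigmaMin A) :
    (A * Vm).mulVec a = (σ : ℂ) • u ∧
      (A * Vm)ᴴ.mulVec u = (σ : ℂ) • a ∧
      sigmaMin (A * Vm) = σ := by
  have hright' : (A * Vm) *ᵥ a = (σ : ℂ) • u := by
    rw [← mulVec_mulVec, ← hva, hright]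
  have hleft' : (A * Vm)ᴴ *ᵥ u = (σ : ℂ) • a := by
    rw [conjTranspose_mul, ← mulVec_mulVec, hleft, mulVec_smul, hva, mulVec_mulVec, hVm,
      one_mulVec]
  have hval : vnorm ((A * Vm) *ᵥ a) = σ := by
    rw [hright', vnorm_smul, hu, mul_one, Complex.norm_real, Real.norm_eq_abs,
      _root_.abs_of_nonneg (hσ ▸ sigmaMin_nonneg A)]
  refine ⟨hright', hleft', ?_⟩
  rw [← hval]
  refine sigmaMin_eq_vnorm_mulVec_of_forall_le ha fun w hw => ?_
  rw [hval, hσ]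
  exact sigmaMin_le_vnorm_mul_mulVec hVm hw

/-- if `(u, v)` is a consistent unit singular pair of `A = P(z;ν)` for
`σ = σ_min(A)` and `v = Vm a` with `a` a unit vector and `Vm` having orthonormal
columns, then `(u, a)` is a consistent unit singular pair of `A·Vm` for its smallest
singular value, which equals `σ`. -/
theorem consistent_pair_restriction
    {n r : ℕ} (hr : 0 < r)
    (A : Matrix (Fin n) (Fin n) ℂ)
    (Vm : Matrix (Fin n) (Fin r) ℂ) (hVm : Vmᴴ * Vm = 1)
    (σ : ℝ) (u v : Fin n → ℂ) (a : Fin r → ℂ)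
    (hu : vnorm u = 1) (hv : vnorm v = 1) (ha : vnorm a = 1)
    (hva : v = Vm.mulVec a)
    (hright : A.mulVec v = (σ : ℂ) • u)
    (hleft : Aᴴ.mulVec u = (σ : ℂ) • v)
    (hσ : σ = sigmaMin A) :
    (A * Vm).mulVec a = (σ : ℂ) • u ∧
      (A * Vm)ᴴ.mulVec u = (σ : ℂ) • a ∧
      sigmaMin (A * Vm) = σ :=
  consistent_pair_restriction_general A Vm hVm σ u v a hu ha hva hright hleft hσ
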